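/- Let V be a 3-dimensional vector space over a finite field F with |F| = q. The square matrix over ℚ whose rows are indexed by the 1-dimensional subspaces L of V, whose columns are indexed by the 2-dimensional subspaces W of V, and whose (L, W)-entry is 1 if L ⊄ W and 0 if L ⊆ W, is invertible. Equivalently, the linear map T from the free ℚ-vector space on the 2-dimensional subspaces to the free ℚ-vector space on the 1-dimensional subspaces, defined by T(W) = Σ_{L ⊄ W} L, is bijective. -/

import Mathlib

/-!
The matrix is `J - N`, where `N` is the point-line incidence matrix of the projective plane
`PG(2, q)` and `J` is the all-ones matrix. If `(J - N) f = 0`, then the lines through any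
point carry the same total `S = ∑ f`. Summing this over the `q + 1` points of a line `W₀`,
and using that two distinct lines meet in exactly one point, gives
`S + q f(W₀) = (q + 1) S`, so `f` is constant with value `S`, and then
`S = (q² + q + 1) S` forces `S = 0`. By duality there are as many lines as points, so
injectivity suffices.
-/

open Finset Module

section Nonincidence

variable {P B : Type*} [Fintype B] (R : Type*) [Field R] (I : P → B → Prop)
  [DecidableRel I]

def nonincidenceMatrix : Matrix P B R := Matrix.of fun p b => if I p b then 0 else 1

theorem nonincidenceMatrix_mulVec (f : B → R) (p : P) :
    (nonincidenceMatrix R I).mulVec f p = ∑ b, if I p b then 0 else f b := by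
  simp [nonincidenceMatrix, Matrix.mulVec, dotProduct, ite_mul]

variable {R I} [Fintype P]

theorem sum_incident_sum_incident_eq {r : ℕ} (hblock : ∀ b, #{p | I p b} = r)
    (hmeet : ∀ b b', b ≠ b' → #{p | I p b ∧ I p b'} = 1) (f : B → R) (b₀ : B) :
    ∑ p with I p b₀, ∑ b with I p b, f b = ∑ b, f b + (r - 1 : R) * f b₀ := by
  classical
  have hcount : ∀ b, (#{p | I p b₀ ∧ I p b} : R) = 1 + if b = b₀ then (r - 1 : R) else 0 := by
    intro b
    split_ifs with h
    · subst h; simp [hblock]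
    · rw [hmeet b₀ b (Ne.symm h)]; simp
  calc ∑ p with I p b₀, ∑ b with I p b, f b
      = ∑ b, ∑ p with I p b₀ ∧ I p b, f b := sum_comm' fun p b => by simp
    _ = ∑ b, (1 + if b = b₀ then (r - 1 : R) else 0) * f b := by
        simp_rw [sum_const, nsmul_eq_mul, hcount]
    _ = ∑ b, f b + (r - 1 : R) * f b₀ := by
        simp [add_mul, ite_mul, sum_add_distrib]

theorem injective_nonincidenceMatrix_mulVec [CharZero R] {r : ℕ} (hr : r ≠ 1)
    (hB : Fintype.card B ≠ 1) (hblock : ∀ b, #{p | I p b} = r)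
    (hmeet : ∀ b b', b ≠ b' → #{p | I p b ∧ I p b'} = 1) :
    Function.Injective (nonincidenceMatrix R I).mulVec := by
  refine (injective_iff_map_eq_zero (nonincidenceMatrix R I).mulVecLin).2 fun f hf => ?_
  set S := ∑ b, f b
  have hinc : ∀ p, ∑ b with I p b, f b = S := by
    intro p
    have h := congrFun hf p
    rw [Matrix.mulVecLin_apply, nonincidenceMatrix_mulVec, sum_ite, sum_const_zero,
      zero_add, Pi.zero_apply] at h
    have hsplit := sum_filter_add_sum_filter_not univ (I p) f
    rwa [h, add_zero] at hsplit
  have hconst : ∀ b₀, f b₀ = S := by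
    intro b₀
    have h := sum_incident_sum_incident_eq hblock hmeet f b₀
    simp only [hinc, sum_const, hblock, nsmul_eq_mul] at h
    have hr' : (r - 1 : R) ≠ 0 := sub_ne_zero.2 (by exact_mod_cast hr)
    exact mul_left_cancel₀ hr' (by linear_combination -h)
  have hS : S = 0 := by
    have h : S = Fintype.card B * S := calc
      S = ∑ _b : B, S := sum_congr rfl fun b _ => hconst b
      _ = Fintype.card B * S := by rw [sum_const, card_univ, nsmul_eq_mul]
    have hB' : (Fintype.card B - 1 : R) ≠ 0 := sub_ne_zero.2 (by exact_mod_cast hB)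
    exact (mul_eq_zero.1 (by linear_combination -h)).resolve_left hB'
  funext b
  rw [hconst b, hS, Pi.zero_apply]

theorem bijective_nonincidenceMatrix_mulVec [CharZero R] {r : ℕ} (hr : r ≠ 1)
    (hcard : Fintype.card P = Fintype.card B) (hB : Fintype.card B ≠ 1)
    (hblock : ∀ b, #{p | I p b} = r) (hmeet : ∀ b b', b ≠ b' → #{p | I p b ∧ I p b'} = 1) :
    Function.Bijective (nonincidenceMatrix R I).mulVec := by
  have hinj := injective_nonincidenceMatrix_mulVec (R := R) hr hB hblock hmeet
  refine ⟨hinj, (LinearMap.injective_iff_surjective_of_finrank_eq_finrank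
    (f := (nonincidenceMatrix R I).mulVecLin) ?_).1 hinj⟩
  simp [hcard]

end Nonincidence

section Geometry

variable {K V : Type*} [Field K] [AddCommGroup V] [Module K V]

theorem Submodule.card_finrank_eq_one [Finite K] {n : ℕ} (hn : finrank K V = n) :
    Nat.card {L : Submodule K V // finrank K L = 1} = ∑ i ∈ range n, Nat.card K ^ i :=
  (Nat.card_congr (Projectivization.equivSubmodule K V)).symm.trans
    (Projectivization.card_of_finrank K V hn)

open Classical in
theorem Submodule.card_filter_finrank_eq_one_le [Finite K]
    [Fintype {L : Submodule K V // finrank K L = 1}] (W : Submodule K V) :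
    #{L : {L : Submodule K V // finrank K L = 1} | L.1 ≤ W} =
      ∑ i ∈ range (finrank K W), Nat.card K ^ i := by
  rw [← Fintype.card_subtype, ← Nat.card_eq_fintype_card, ← Submodule.card_finrank_eq_one rfl]
  refine (Nat.card_congr ?_).symm
  refine ((Submodule.MapSubtype.orderIso W).toEquiv.subtypeEquiv (q := fun L => finrank K L.1 = 1)
    fun L => ?_).trans <|
      (Equiv.subtypeSubtypeEquivSubtypeInter (fun L : Submodule K V => L ≤ W)
        (fun L => finrank K L = 1)).trans <|
      (Equiv.subtypeEquivRight fun _ => and_comm).trans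
      (Equiv.subtypeSubtypeEquivSubtypeInter (fun L : Submodule K V => finrank K L = 1)
        (· ≤ W)).symm
  change finrank K L = 1 ↔ finrank K (L.map W.subtype) = 1
  rw [Submodule.finrank_map_subtype_eq]

theorem Submodule.card_finrank_eq_card_dual [FiniteDimensional K V] {k m : ℕ}
    (h : k + m = finrank K V) :
    Nat.card {W : Submodule K V // finrank K W = k} =
      Nat.card {Φ : Submodule K (Dual K V) // finrank K Φ = m} :=
  Nat.card_congr <|
    (Subspace.orderIsoFiniteDimensional (K := K) (V := V)).toEquiv.subtypeEquiv fun W => by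
    have := Subspace.finrank_add_finrank_dualAnnihilator_eq W
    change finrank K W = k ↔ finrank K W.dualAnnihilator = m
    omega

theorem Submodule.finrank_inf_add_two_of_ne [FiniteDimensional K V] {W₁ W₂ : Submodule K V}
    (h₁ : finrank K W₁ + 1 = finrank K V) (h₂ : finrank K W₂ + 1 = finrank K V)
    (hne : W₁ ≠ W₂) : finrank K ↥(W₁ ⊓ W₂) + 2 = finrank K V := by
  have hlt : W₁ < W₁ ⊔ W₂ := by
    refine lt_of_le_of_ne le_sup_left fun h => hne ?_
    exact Submodule.eq_of_le_of_finrank_eq (h ▸ le_sup_right : W₂ ≤ W₁) (by omega) |>.symm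
  have hsup : finrank K ↥(W₁ ⊔ W₂) = finrank K V := by
    have := Submodule.finrank_lt_finrank_of_lt hlt
    have := Submodule.finrank_le (W₁ ⊔ W₂)
    omega
  have := Submodule.finrank_sup_add_finrank_inf_eq W₁ W₂
  omega

end Geometry

open Classical in
theorem nonincidence_map_bijective_general
    (F V : Type) [Field F] [Fintype F] [AddCommGroup V] [Module F V]
    (hV : Module.finrank F V = 3)
    [Fintype {L : Submodule F V // Module.finrank F L = 1}]
    [Fintype {W : Submodule F V // Module.finrank F W = 2}] :
    Function.Bijective
      (fun (f : {W : Submodule F V // Module.finrank F W = 2} → ℚ)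
           (L : {L : Submodule F V // Module.finrank F L = 1}) =>
        ∑ W : {W : Submodule F V // Module.finrank F W = 2},
          if (L : Submodule F V) ≤ (W : Submodule F V) then 0 else f W) := by
  have : FiniteDimensional F V := Module.finite_of_finrank_eq_succ hV
  have hq : 1 < Nat.card F := Finite.one_lt_card
  have hpoints : Fintype.card {L : Submodule F V // finrank F L = 1} =
      ∑ i ∈ range 3, Nat.card F ^ i := by
    rw [← Nat.card_eq_fintype_card, Submodule.card_finrank_eq_one hV]
  have hlines : Fintype.card {W : Submodule F V // finrank F W = 2} =
      ∑ i ∈ range 3, Nat.card F ^ i := by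
    rw [← Nat.card_eq_fintype_card, Submodule.card_finrank_eq_card_dual (m := 1) (by omega),
      Submodule.card_finrank_eq_one (by rw [Subspace.dual_finrank_eq, hV])]
  have hblock (W : {W : Submodule F V // finrank F W = 2}) :
      #{L : {L : Submodule F V // finrank F L = 1} | L.1 ≤ W.1} = Nat.card F + 1 := by
    simp [Submodule.card_filter_finrank_eq_one_le, W.2, sum_range_succ, add_comm]
  have hmeet (W W' : {W : Submodule F V // finrank F W = 2}) (hne : W ≠ W') :
      #{L : {L : Submodule F V // finrank F L = 1} | L.1 ≤ W.1 ∧ L.1 ≤ W'.1} = 1 := by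
    have := Submodule.finrank_inf_add_two_of_ne (by rw [W.2, hV]) (by rw [W'.2, hV])
      (Subtype.coe_injective.ne hne)
    simp_rw [← le_inf_iff, Submodule.card_filter_finrank_eq_one_le]
    simp [show finrank F ↥(W.1 ⊓ W'.1) = 1 by omega]
  have hB : Fintype.card {W : Submodule F V // finrank F W = 2} ≠ 1 := by
    rw [hlines]; simp only [sum_range_succ, sum_range_zero]; nlinarith
  convert bijective_nonincidenceMatrix_mulVec (R := ℚ) (by omega) (hpoints.trans hlines.symm) hB
    hblock hmeet using 1
  funext f L
  exact (nonincidenceMatrix_mulVec ℚ (fun L W => L.1 ≤ W.1) f L).symm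

open Classical in
/-- Let `V` be 3-dimensional over a finite field with `q` elements. The linear map `T`
from the free ℚ-vector space on the 2-dimensional subspaces of `V` to the free ℚ-vector
space on the 1-dimensional subspaces, defined by `T W = ∑_{L ⊄ W} L`, is bijective
(equivalently, the 0-1 incidence matrix with `(L, W)`-entry `1` iff `L ⊄ W` is
invertible). -/
theorem nonincidence_map_bijective
    (F V : Type) [Field F] [Fintype F] [AddCommGroup V] [Module F V]
    (q : ℕ) (hq : Fintype.card F = q) (hV : Module.finrank F V = 3)
    [FiniteDimensional F V]
    [Fintype {L : Submodule F V // Module.finrank F L = 1}]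
    [Fintype {W : Submodule F V // Module.finrank F W = 2}] :
    Function.Bijective
      (fun (f : {W : Submodule F V // Module.finrank F W = 2} → ℚ)
           (L : {L : Submodule F V // Module.finrank F L = 1}) =>
        ∑ W : {W : Submodule F V // Module.finrank F W = 2},
          if (L : Submodule F V) ≤ (W : Submodule F V) then 0 else f W) :=
  nonincidence_map_bijective_general F V hV
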